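/- arXiv:1511.06071 — 2 statements merged into one kernel-verified Lean document; each statement's English description precedes it below -/
import Mathlib

section
/- Slepian–Wolf coding with full side information at the decoder: Let X and U be finite alphabets and P_XU a joint pmf on X × U. For every δ > 0 and ε > 0 and all sufficiently large n, there exist a finite set M with |M| ≤ 2^{n(H(X|U)+δ)}, an encoder φ : X^n → M, and a decoder D : M × U^n → X^n such that the n-fold product pmf P_XU^{⊗n} assigns probability at most ε to the set {(x^n,u^n) : D(φ(x^n), u^n) ≠ x^n}. -/
/-
Random binning with conditional-typicality decoding. Hash `x^n` uniformly at random into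
`⌊2^{n(H(X|U)+δ)}⌋` bins; given the bin and `u^n`, decode to a sequence of that bin whose
conditional probability `P(x^n | u^n)` is at least `2^{-n(H(X|U)+δ/2)}`. Given `u^n` there are at
most `2^{n(H(X|U)+δ/2)}` such candidates, so, averaged over the binning maps, another candidate
shares the bin of `x^n` with probability at most `2·2^{-nδ/2}`. The true `x^n` fails to be a
candidate only if the sum of the i.i.d. surprisals `-log P(x_t | u_t)`, whose mean is `H(X|U)`,
exceeds its expectation by `nδ/2`; Chebyshev's inequality bounds this by `4σ²/(nδ²)`, where
`σ²` is the variance of a single surprisal.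
-/

open scoped BigOperators

/-- Shannon entropy (base 2) of a pmf on a finite set. -/
noncomputable def shEnt {S : Type*} [Fintype S] (p : S → ℝ) : ℝ :=
  ∑ s, -(p s * Real.logb 2 (p s))

/-- Conditional Shannon entropy `H(X|U)` computed from a joint pmf on `X × U`. -/
noncomputable def condEnt {X U : Type*} [Fintype X] [Fintype U] (P : X × U → ℝ) : ℝ :=
  shEnt P - shEnt (fun u => ∑ x, P (x, u))

open Finset Filter Topology

lemma sum_ite_le_sum_mul_sq_div {α : Type*} (s : Finset α) {w S : α → ℝ}
    (hw : ∀ i ∈ s, 0 ≤ w i) {c : ℝ} (hc : 0 < c) :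
    ∑ i ∈ s, (if c ≤ S i then w i else 0) ≤ (∑ i ∈ s, w i * S i ^ 2) / c ^ 2 := by
  rw [sum_div]
  refine sum_le_sum fun i hi => ?_
  have hwi := hw i hi
  split_ifs with hS
  · rw [le_div_iff₀ (by positivity)]
    gcongr
  · positivity

section ProductPmf

variable {ι Z : Type*} [Fintype ι] [DecidableEq ι] [Fintype Z] {q f : Z → ℝ}

lemma sum_prod_mul_prod (q : Z → ℝ) (h : ι → Z → ℝ) :
    ∑ zs : ι → Z, (∏ r, q (zs r)) * ∏ r, h r (zs r) = ∏ r, ∑ z, q z * h r z := by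
  simp_rw [← prod_mul_distrib]
  exact (Fintype.prod_sum fun r z => q z * h r z).symm

lemma sum_prod_mul_apply_mul_apply (hq : ∑ z, q z = 1) (hf : ∑ z, q z * f z = 0) (t s : ι) :
    ∑ zs : ι → Z, (∏ r, q (zs r)) * (f (zs t) * f (zs s))
      = if t = s then ∑ z, q z * f z ^ 2 else 0 := by
  let h : ι → Z → ℝ := fun r z => (if r = t then f z else 1) * (if r = s then f z else 1)
  have hh : ∀ zs : ι → Z, ∏ r, h r (zs r) = f (zs t) * f (zs s) := fun zs => by
    simp only [h, prod_mul_distrib, Fintype.prod_ite_eq']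
  simp_rw [← hh, sum_prod_mul_prod, h]
  split_ifs with hts
  · subst hts
    rw [Fintype.prod_eq_single t fun r hr => by simp [hr, hq]]
    simp [sq]
  · exact prod_eq_zero (mem_univ t) (by simp [hts, hf])

lemma sum_prod_mul_sum_sq (hq : ∑ z, q z = 1) (hf : ∑ z, q z * f z = 0) :
    ∑ zs : ι → Z, (∏ r, q (zs r)) * (∑ t, f (zs t)) ^ 2
      = Fintype.card ι * ∑ z, q z * f z ^ 2 := by
  simp_rw [sq (∑ t, _), sum_mul_sum, mul_sum]
  rw [sum_comm]
  simp_rw [sum_comm (γ := ι → Z), sum_prod_mul_apply_mul_apply hq hf, sum_ite_eq, mem_univ,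
    if_true, sum_const, card_univ, nsmul_eq_mul]
  exact mul_sum _ _ _

lemma sum_ite_le_sum_apply_le_card_mul_div_sq (hq0 : ∀ z, 0 ≤ q z) (hq : ∑ z, q z = 1)
    (hf : ∑ z, q z * f z = 0) {c : ℝ} (hc : 0 < c) :
    ∑ zs : ι → Z, (if c ≤ ∑ t, f (zs t) then ∏ t, q (zs t) else 0)
      ≤ Fintype.card ι * (∑ z, q z * f z ^ 2) / c ^ 2 := by
  rw [← sum_prod_mul_sum_sq hq hf]
  exact sum_ite_le_sum_mul_sq_div _ (fun zs _ => prod_nonneg fun t _ => hq0 _) hc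

end ProductPmf

section PiProd

variable {ι α β : Type*} [Fintype ι] [DecidableEq ι] [Fintype α] [Fintype β]

lemma sum_pi_sum_pi_eq_sum_pi_prod {M : Type*} [AddCommMonoid M] (F : (ι → α × β) → M) :
    ∑ xs : ι → α, ∑ us : ι → β, F (fun t => (xs t, us t)) = ∑ ws : ι → α × β, F ws := by
  rw [← Fintype.sum_prod_type',
    ← (Equiv.arrowProdEquivProdArrow ι (fun _ => α) (fun _ => β)).sum_comp]
  rfl

lemma sum_pi_sum_pi_prod_eq_one {P : α × β → ℝ} (hP1 : ∑ z, P z = 1) :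
    ∑ xs : ι → α, ∑ us : ι → β, ∏ t, P (xs t, us t) = 1 := by
  rw [sum_pi_sum_pi_eq_sum_pi_prod (fun ws => ∏ t, P (ws t)), ← Fintype.prod_sum]
  simp [hP1]

end PiProd

section Binning

variable {A B V : Type*}

open Classical in
noncomputable def binDecoder [Nonempty A] (T : V → Finset A) (φ : A → B) (i : B) (v : V) : A :=
  if h : ∃ a ∈ T v, φ a = i then h.choose else Classical.arbitrary A

lemma notMem_or_exists_collision_of_binDecoder_ne [Nonempty A] {T : V → Finset A}
    {φ : A → B} {a : A} {v : V} (h : binDecoder T φ (φ a) v ≠ a) :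
    a ∉ T v ∨ ∃ a' ∈ T v, a' ≠ a ∧ φ a' = φ a := by
  by_contra! hcon
  have hex : ∃ a' ∈ T v, φ a' = φ a := ⟨a, hcon.1, rfl⟩
  have hdec : binDecoder T φ (φ a) v = hex.choose := dif_pos hex
  obtain ⟨hmem, hbin⟩ := hex.choose_spec
  exact h (hdec.trans (by_contra fun hne => hcon.2 _ hmem hne hbin))

variable [Fintype A] [DecidableEq A] [Fintype B] [DecidableEq B]

lemma card_filter_apply_eq_apply_mul_card {a a' : A} (h : a ≠ a') :
    #{φ : A → B | φ a' = φ a} * Fintype.card B = Fintype.card (A → B) := by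
  let e := Equiv.piSplitAt a' (fun _ => B)
  have hcount : #{φ : A → B | φ a' = φ a} = Fintype.card ({j // j ≠ a'} → B) := by
    rw [card_filter, ← Fintype.sum_equiv e.symm _ _ (fun _ => rfl), Fintype.sum_prod_type_right]
    simp [e, Equiv.piSplitAt, h]
  rw [hcount, Fintype.card_congr e, Fintype.card_prod, mul_comm]

lemma card_filter_exists_collision_mul_card_le (s : Finset A) (a : A) :
    #{φ : A → B | ∃ a' ∈ s, a' ≠ a ∧ φ a' = φ a} * Fintype.card B
      ≤ #s * Fintype.card (A → B) :=
  calc #{φ : A → B | ∃ a' ∈ s, a' ≠ a ∧ φ a' = φ a} * Fintype.card B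
      ≤ (∑ a' ∈ s.erase a, #{φ : A → B | φ a' = φ a}) * Fintype.card B := by
        gcongr
        refine (card_le_card fun φ hφ => ?_).trans card_biUnion_le
        obtain ⟨a', ha', hne, heq⟩ := (mem_filter.mp hφ).2
        exact mem_biUnion.mpr ⟨a', mem_erase.mpr ⟨hne, ha'⟩, mem_filter.mpr ⟨mem_univ _, heq⟩⟩
    _ = #(s.erase a) * Fintype.card (A → B) := by
        rw [sum_mul, sum_congr rfl fun a' ha' =>
          card_filter_apply_eq_apply_mul_card (B := B) (mem_erase.mp ha').1.symm,
          sum_const, smul_eq_mul]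
    _ ≤ #s * Fintype.card (A → B) := by gcongr; exact erase_subset a s

lemma exists_sum_collision_le [Fintype V] [Nonempty B] (T : V → Finset A) {w : A → V → ℝ}
    (hw : ∀ a v, 0 ≤ w a v) {L : ℝ} (hT : ∀ v, (#(T v) : ℝ) ≤ L) :
    ∃ φ : A → B, ∑ a, ∑ v, (if ∃ a' ∈ T v, a' ≠ a ∧ φ a' = φ a then w a v else 0)
      ≤ L * (∑ a, ∑ v, w a v) / Fintype.card B := by
  have hB : (0 : ℝ) < Fintype.card B := by exact_mod_cast Fintype.card_pos
  have hpoint : ∀ a v, ∑ φ : A → B, (if ∃ a' ∈ T v, a' ≠ a ∧ φ a' = φ a then w a v else 0)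
      ≤ Fintype.card (A → B) * (L * w a v / Fintype.card B) := by
    intro a v
    have hcoll : (#{φ : A → B | ∃ a' ∈ T v, a' ≠ a ∧ φ a' = φ a} : ℝ) * Fintype.card B
        ≤ #(T v) * Fintype.card (A → B) := by
      exact_mod_cast card_filter_exists_collision_mul_card_le (T v) a
    rw [← sum_filter, sum_const, nsmul_eq_mul, mul_div_assoc', le_div_iff₀ hB]
    calc _ = (#{φ : A → B | ∃ a' ∈ T v, a' ≠ a ∧ φ a' = φ a} : ℝ) * Fintype.card B * w a v := by
          ring
      _ ≤ #(T v) * Fintype.card (A → B) * w a v := mul_le_mul_of_nonneg_right hcoll (hw a v)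
      _ ≤ L * Fintype.card (A → B) * w a v := by have := hw a v; gcongr; exact hT v
      _ = _ := by ring
  have htotal : ∑ φ : A → B, ∑ a, ∑ v,
      (if ∃ a' ∈ T v, a' ≠ a ∧ φ a' = φ a then w a v else 0)
      ≤ ∑ _φ : A → B, L * (∑ a, ∑ v, w a v) / Fintype.card B :=
    calc _ = ∑ a, ∑ v, ∑ φ : A → B,
          (if ∃ a' ∈ T v, a' ≠ a ∧ φ a' = φ a then w a v else 0) := by
          simp_rw [sum_comm (γ := A → B)]
      _ ≤ ∑ a, ∑ v, Fintype.card (A → B) * (L * w a v / Fintype.card B) := by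
          gcongr with a _ v _
          exact hpoint a v
      _ = _ := by simp only [sum_const, card_univ, nsmul_eq_mul, mul_sum, sum_div]
  obtain ⟨φ, -, hφ⟩ := exists_le_of_sum_le univ_nonempty htotal
  exact ⟨φ, hφ⟩

lemma exists_sum_binDecoder_ne_le [Fintype V] [Nonempty A] [Nonempty B] (T : V → Finset A)
    {w : A → V → ℝ} (hw : ∀ a v, 0 ≤ w a v) {L : ℝ} (hT : ∀ v, (#(T v) : ℝ) ≤ L) :
    ∃ φ : A → B, ∑ a, ∑ v, (if binDecoder T φ (φ a) v ≠ a then w a v else 0)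
      ≤ ∑ a, ∑ v, (if a ∉ T v then w a v else 0)
        + L * (∑ a, ∑ v, w a v) / Fintype.card B := by
  obtain ⟨φ, hφ⟩ := exists_sum_collision_le (B := B) T hw hT
  refine ⟨φ, le_trans ?_ (add_le_add_right hφ _)⟩
  simp only [← sum_add_distrib]
  gcongr with a _ v _
  have hwav := hw a v
  split_ifs with hdec hnot hcoll <;> try linarith
  rcases notMem_or_exists_collision_of_binDecoder_ne hdec with h | h <;> contradiction

end Binning

section CondProb

variable {X U : Type*} [Fintype X] {P : X × U → ℝ}

/-- `P(x | u)`; it is `0` (not undefined) where the marginal `P_U(u)` vanishes. -/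
noncomputable def condProb (P : X × U → ℝ) (z : X × U) : ℝ :=
  P z / ∑ x, P (x, z.2)

noncomputable def condSurprisal (P : X × U → ℝ) (z : X × U) : ℝ :=
  -Real.logb 2 (condProb P z)

lemma le_sum_marginal (hP0 : ∀ z, 0 ≤ P z) (z : X × U) : P z ≤ ∑ x, P (x, z.2) :=
  single_le_sum (f := fun x => P (x, z.2)) (fun _ _ => hP0 _) (mem_univ z.1)

lemma condProb_nonneg (hP0 : ∀ z, 0 ≤ P z) (z : X × U) : 0 ≤ condProb P z :=
  div_nonneg (hP0 z) ((hP0 z).trans (le_sum_marginal hP0 z))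

lemma sum_condProb_le_one (u : U) : ∑ x, condProb P (x, u) ≤ 1 := by
  simp only [condProb, ← sum_div]
  exact div_self_le_one _

lemma condSurprisal_nonneg (hP0 : ∀ z, 0 ≤ P z) (z : X × U) : 0 ≤ condSurprisal P z :=
  neg_nonneg.mpr <| Real.logb_nonpos one_lt_two (condProb_nonneg hP0 z)
    (div_le_one_of_le₀ (le_sum_marginal hP0 z) ((hP0 z).trans (le_sum_marginal hP0 z)))

variable {ι : Type*} [Fintype ι] [DecidableEq ι]

noncomputable def condTypicalSet (P : X × U → ℝ) (b : ℝ) (us : ι → U) : Finset (ι → X) :=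
  {xs | 2 ^ (-b) ≤ ∏ t, condProb P (xs t, us t)}

lemma card_condTypicalSet_le (hP0 : ∀ z, 0 ≤ P z) (b : ℝ) (us : ι → U) :
    (#(condTypicalSet P b us) : ℝ) ≤ 2 ^ b := by
  have hmass : #(condTypicalSet P b us) • (2 : ℝ) ^ (-b) ≤ 1 :=
    calc #(condTypicalSet P b us) • (2 : ℝ) ^ (-b)
        ≤ ∑ xs ∈ condTypicalSet P b us, ∏ t, condProb P (xs t, us t) :=
          card_nsmul_le_sum _ _ _ fun xs hxs => (mem_filter.mp hxs).2
      _ ≤ ∑ xs : ι → X, ∏ t, condProb P (xs t, us t) :=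
          sum_le_sum_of_subset_of_nonneg (subset_univ _)
            fun xs _ _ => prod_nonneg fun t _ => condProb_nonneg hP0 _
      _ = ∏ t, ∑ x, condProb P (x, us t) :=
          (Fintype.prod_sum fun t x => condProb P (x, us t)).symm
      _ ≤ 1 := prod_le_one (fun t _ => sum_nonneg fun x _ => condProb_nonneg hP0 _)
          fun t _ => sum_condProb_le_one (us t)
  rwa [nsmul_eq_mul, Real.rpow_neg zero_le_two, ← div_eq_mul_inv,
    div_le_one (by positivity)] at hmass

lemma lt_sum_condSurprisal_of_notMem_condTypicalSet (hP0 : ∀ z, 0 ≤ P z) {b : ℝ}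
    {xs : ι → X} {us : ι → U} (hpos : 0 < ∏ t, P (xs t, us t))
    (hxs : xs ∉ condTypicalSet P b us) : b < ∑ t, condSurprisal P (xs t, us t) := by
  have hcond : ∀ t, condProb P (xs t, us t) ≠ 0 := fun t => by
    have hP : P (xs t, us t) ≠ 0 := prod_ne_zero_iff.mp hpos.ne' t (mem_univ t)
    exact div_ne_zero hP (((hP0 _).lt_of_ne' hP).trans_le (le_sum_marginal hP0 _)).ne'
  have hlt : ∏ t, condProb P (xs t, us t) < 2 ^ (-b) := by
    simpa [condTypicalSet] using hxs
  have hlog := (Real.logb_lt_iff_lt_rpow one_lt_two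
    (prod_pos fun t _ => (condProb_nonneg hP0 _).lt_of_ne' (hcond t))).mpr hlt
  rw [Real.logb_prod _ _ fun t _ => hcond t] at hlog
  simp only [condSurprisal, sum_neg_distrib]
  linarith

end CondProb

section CondEntropy

variable {X U : Type*} [Fintype X] [Fintype U] {P : X × U → ℝ}

noncomputable def condVarentropy (P : X × U → ℝ) : ℝ :=
  ∑ z, P z * (condSurprisal P z - condEnt P) ^ 2

lemma condEnt_eq_sum_mul_condSurprisal (hP0 : ∀ z, 0 ≤ P z) :
    condEnt P = ∑ z, P z * condSurprisal P z := by
  have hmarg : shEnt (fun u => ∑ x, P (x, u))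
      = ∑ z : X × U, -(P z * Real.logb 2 (∑ x, P (x, z.2))) := by
    rw [shEnt, Fintype.sum_prod_type_right]
    simp only [sum_mul, sum_neg_distrib]
  rw [condEnt, shEnt, hmarg, ← sum_sub_distrib]
  refine sum_congr rfl fun z _ => ?_
  rcases (hP0 z).eq_or_lt with hz | hz
  · simp [← hz]
  · rw [condSurprisal, condProb, Real.logb_div hz.ne' (hz.trans_le (le_sum_marginal hP0 z)).ne']
    ring

lemma condEnt_nonneg (hP0 : ∀ z, 0 ≤ P z) : 0 ≤ condEnt P := by
  rw [condEnt_eq_sum_mul_condSurprisal hP0]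
  exact sum_nonneg fun z _ => mul_nonneg (hP0 z) (condSurprisal_nonneg hP0 z)

variable [DecidableEq X] {ι : Type*} [Fintype ι] [DecidableEq ι]

lemma sum_notMem_condTypicalSet_le (hP0 : ∀ z, 0 ≤ P z) (hP1 : ∑ z, P z = 1) {c : ℝ}
    (hc : 0 < c) :
    ∑ xs : ι → X, ∑ us : ι → U,
      (if xs ∉ condTypicalSet P (Fintype.card ι * condEnt P + c) us
        then ∏ t, P (xs t, us t) else 0)
      ≤ Fintype.card ι * condVarentropy P / c ^ 2 := by
  have hmean : ∑ z, P z * (condSurprisal P z - condEnt P) = 0 := by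
    simp only [mul_sub, sum_sub_distrib, ← sum_mul, hP1, ← condEnt_eq_sum_mul_condSurprisal hP0]
    ring
  have hpoint : ∀ (xs : ι → X) (us : ι → U),
      (if xs ∉ condTypicalSet P (Fintype.card ι * condEnt P + c) us
        then ∏ t, P (xs t, us t) else 0)
      ≤ if c ≤ ∑ t, (condSurprisal P (xs t, us t) - condEnt P)
        then ∏ t, P (xs t, us t) else 0 := by
    intro xs us
    rcases (prod_nonneg (s := univ) fun t _ => hP0 (xs t, us t)).eq_or_lt with h0 | hpos
    · simp [← h0]
    · by_cases hnot : xs ∉ condTypicalSet P (Fintype.card ι * condEnt P + c) us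
      · have hdev : c ≤ ∑ t, (condSurprisal P (xs t, us t) - condEnt P) := by
          have := lt_sum_condSurprisal_of_notMem_condTypicalSet hP0 hpos hnot
          simp only [sum_sub_distrib, sum_const, card_univ, nsmul_eq_mul]
          linarith
        rw [if_pos hnot, if_pos hdev]
      · rw [if_neg hnot]
        split_ifs <;> positivity
  calc _ ≤ ∑ xs : ι → X, ∑ us : ι → U,
        (if c ≤ ∑ t, (condSurprisal P (xs t, us t) - condEnt P)
          then ∏ t, P (xs t, us t) else 0) := by
        gcongr with xs _ us _
        exact hpoint xs us
    _ = ∑ ws : ι → X × U,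
        (if c ≤ ∑ t, (condSurprisal P (ws t) - condEnt P) then ∏ t, P (ws t) else 0) :=
        sum_pi_sum_pi_eq_sum_pi_prod
          (fun ws => if c ≤ ∑ t, (condSurprisal P (ws t) - condEnt P) then ∏ t, P (ws t) else 0)
    _ ≤ _ := sum_ite_le_sum_apply_le_card_mul_div_sq hP0 hP1 hmean hc

lemma exists_binning_error_le [Nonempty X] {B : Type*} [Fintype B] [DecidableEq B] [Nonempty B]
    (hP0 : ∀ z, 0 ≤ P z) (hP1 : ∑ z, P z = 1) {c : ℝ} (hc : 0 < c) :
    ∃ φ : (ι → X) → B,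
      ∑ xs : ι → X, ∑ us : ι → U,
        (if binDecoder (condTypicalSet P (Fintype.card ι * condEnt P + c)) φ (φ xs) us ≠ xs
          then ∏ t, P (xs t, us t) else 0)
      ≤ Fintype.card ι * condVarentropy P / c ^ 2
        + 2 ^ (Fintype.card ι * condEnt P + c) / Fintype.card B := by
  obtain ⟨φ, hφ⟩ := exists_sum_binDecoder_ne_le (B := B)
    (condTypicalSet (ι := ι) P (Fintype.card ι * condEnt P + c))
    (fun xs us => prod_nonneg fun t _ => hP0 (xs t, us t)) (card_condTypicalSet_le hP0 _)
  refine ⟨φ, hφ.trans ?_⟩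
  rw [sum_pi_sum_pi_prod_eq_one hP1, mul_one]
  gcongr
  exact sum_notMem_condTypicalSet_le hP0 hP1 hc

end CondEntropy

lemma two_rpow_div_floor_two_rpow_add_le {a d : ℝ} (ha : 0 ≤ a) (hd : 0 ≤ d) :
    (2 : ℝ) ^ a / ⌊(2 : ℝ) ^ (a + d)⌋₊ ≤ 2 * 2 ^ (-d) := by
  have hx : 1 ≤ (2 : ℝ) ^ (a + d) := Real.one_le_rpow one_le_two (by positivity)
  have hfloor : (2 : ℝ) ^ (a + d) / 2 ≤ ⌊(2 : ℝ) ^ (a + d)⌋₊ := by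
    have h1 : (1 : ℝ) ≤ ⌊(2 : ℝ) ^ (a + d)⌋₊ := by
      exact_mod_cast (Nat.one_le_floor_iff _).mpr hx
    linarith [Nat.lt_floor_add_one ((2 : ℝ) ^ (a + d))]
  calc (2 : ℝ) ^ a / ⌊(2 : ℝ) ^ (a + d)⌋₊ ≤ 2 ^ a / (2 ^ (a + d) / 2) := by gcongr
    _ = 2 * 2 ^ (-d) := by
      rw [Real.rpow_neg zero_le_two, Real.rpow_add two_pos]
      field_simp

lemma exists_code_error_le {X U : Type*} [Fintype X] [Fintype U] [DecidableEq X] [Nonempty X]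
    {P : X × U → ℝ} (hP0 : ∀ z, 0 ≤ P z) (hP1 : ∑ z, P z = 1) {δ : ℝ} (hδ : 0 < δ) {n : ℕ}
    (hn : 0 < n) :
    ∃ (m : ℕ) (φ : (Fin n → X) → Fin m) (D : Fin m × (Fin n → U) → (Fin n → X)),
      (m : ℝ) ≤ 2 ^ ((n : ℝ) * (condEnt P + δ)) ∧
      ∑ xs : Fin n → X, ∑ us : Fin n → U,
        (if D (φ xs, us) ≠ xs then ∏ t, P (xs t, us t) else 0)
        ≤ 4 * condVarentropy P / δ ^ 2 / n + 2 * (2 ^ (-(δ / 2))) ^ n := by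
  have hH := condEnt_nonneg hP0
  set m := ⌊(2 : ℝ) ^ (n * (condEnt P + δ))⌋₊
  have : Nonempty (Fin m) :=
    ⟨⟨0, Nat.floor_pos.mpr (Real.one_le_rpow one_le_two (by positivity))⟩⟩
  obtain ⟨φ, hφ⟩ := exists_binning_error_le (ι := Fin n) (B := Fin m) hP0 hP1
    (c := n * δ / 2) (by positivity)
  refine ⟨m, φ, fun p => binDecoder _ φ p.1 p.2, Nat.floor_le (by positivity), hφ.trans ?_⟩
  simp only [Fintype.card_fin]
  refine add_le_add (le_of_eq (by field_simp; ring)) ?_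
  have hbins := two_rpow_div_floor_two_rpow_add_le (a := n * condEnt P + n * δ / 2)
    (d := n * δ / 2) (by positivity) (by positivity)
  rwa [show n * condEnt P + n * δ / 2 + n * δ / 2 = n * (condEnt P + δ) by ring,
    show -(n * δ / 2) = -(δ / 2) * n by ring, Real.rpow_mul_natCast zero_le_two] at hbins

/-- Slepian–Wolf coding with full side information at the decoder. -/
theorem slepian_wolf_full_side_info
    {X U : Type} [Fintype X] [Fintype U] [DecidableEq X]
    (P : X × U → ℝ) (hP0 : ∀ z, 0 ≤ P z) (hP1 : ∑ z, P z = 1)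
    (δ ε : ℝ) (hδ : 0 < δ) (hε : 0 < ε) :
    ∃ N : ℕ, ∀ n, N ≤ n →
      ∃ (M : Type) (_ : Fintype M)
        (φ : (Fin n → X) → M) (D : M × (Fin n → U) → (Fin n → X)),
        (Fintype.card M : ℝ) ≤ 2 ^ ((n : ℝ) * (condEnt P + δ)) ∧
        ∑ xs : Fin n → X, ∑ us : Fin n → U,
          (if D (φ xs, us) ≠ xs then ∏ t, P (xs t, us t) else 0) ≤ ε := by
  have : Nonempty X := by
    by_contra hX
    simp [not_nonempty_iff.mp hX] at hP1
  have hlim : Tendsto (fun n : ℕ => 4 * condVarentropy P / δ ^ 2 / n + 2 * (2 ^ (-(δ / 2))) ^ n)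
      atTop (𝓝 0) := by
    simpa using (tendsto_const_div_atTop_nhds_zero_nat _).add
      ((tendsto_pow_atTop_nhds_zero_of_lt_one (by positivity)
        (Real.rpow_lt_one_of_one_lt_of_neg one_lt_two (by linarith))).const_mul 2)
  obtain ⟨N, hN⟩ :=
    eventually_atTop.mp ((hlim.eventually (ge_mem_nhds hε)).and (eventually_gt_atTop 0))
  refine ⟨N, fun n hn => ?_⟩
  obtain ⟨hbound, hn⟩ := hN n hn
  obtain ⟨m, φ, D, hm, herr⟩ := exists_code_error_le hP0 hP1 hδ hn
  exact ⟨Fin m, inferInstance, φ, D, by simpa using hm, herr.trans hbound⟩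
end

section
/- Fano's inequality: Let X and X̂ be random variables on a probability space taking values in a finite set S with |S| ≥ 2, and let Pe = Pr[X ≠ X̂]. Then H(X | X̂) ≤ h₂(Pe) + Pe · log₂(|S| − 1), where h₂(t) = −t log₂ t − (1−t) log₂(1−t) is the binary entropy function (with h₂(0) = h₂(1) = 0). -/
open scoped BigOperators

/-- The binary entropy function `h₂(t)` (base 2), with `h₂(0) = h₂(1) = 0`. -/
noncomputable def binEnt (t : ℝ) : ℝ :=
  -(t * Real.logb 2 t) - (1 - t) * Real.logb 2 (1 - t)

/-!
Gibbs' inequality `-∑ p log p ≤ -∑ p log q`, applied to the joint law `P` and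
`q(x, u) = P(u) r(x | u)` for a sub-stochastic kernel `r`, gives
`H(X|X̂) ≤ -∑ P(x, u) log r(x | u)`.
Fano's bound is this cross entropy for the kernel that keeps `u` with probability `1 - Pe` and
spreads `Pe` uniformly over the `|S| - 1` other values: `log r` is constant on the diagonal and
off it, with masses `1 - Pe` and `Pe`.
-/

open Finset Real MeasureTheory

theorem Real.mul_log_sub_log_le {a b : ℝ} (ha : 0 ≤ a) (hb : 0 ≤ b) (hab : 0 < a → 0 < b) :
    a * (log b - log a) ≤ b - a := by
  rcases ha.eq_or_lt with rfl | ha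
  · simpa using hb
  have hlog := log_le_sub_one_of_pos (div_pos (hab ha) ha)
  rw [log_div (hab ha).ne' ha.ne'] at hlog
  calc a * (log b - log a) ≤ a * (b / a - 1) := mul_le_mul_of_nonneg_left hlog ha.le
    _ = b - a := by field_simp

theorem shEnt_le_sum_neg_mul_logb {ι : Type*} [Fintype ι] {p q : ι → ℝ} (hp : ∀ i, 0 ≤ p i)
    (hq : ∀ i, 0 ≤ q i) (hpq : ∀ i, p i ≠ 0 → 0 < q i) (hsum : ∑ i, q i ≤ ∑ i, p i) :
    shEnt p ≤ ∑ i, -(p i * logb 2 (q i)) := by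
  have hgibbs : ∑ i, p i * (log (q i) - log (p i)) ≤ 0 :=
    calc ∑ i, p i * (log (q i) - log (p i)) ≤ ∑ i, (q i - p i) :=
          sum_le_sum fun i _ => mul_log_sub_log_le (hp i) (hq i) fun h => hpq i h.ne'
      _ ≤ 0 := by rw [sum_sub_distrib]; linarith
  have hdiff : ∑ i, -(p i * logb 2 (q i)) - shEnt p =
      -(∑ i, p i * (log (q i) - log (p i))) / log 2 := by
    simp only [shEnt, logb, ← sum_sub_distrib, ← sum_neg_distrib, sum_div]
    exact sum_congr rfl fun i _ => by ring
  have : 0 ≤ -(∑ i, p i * (log (q i) - log (p i))) / log 2 :=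
    div_nonneg (by linarith) (log_pos one_lt_two).le
  linarith

theorem condEnt_le_sum_neg_mul_logb {X U : Type*} [Fintype X] [Fintype U] {P r : X × U → ℝ}
    (hP : ∀ z, 0 ≤ P z) (hr : ∀ z, 0 ≤ r z) (hPr : ∀ z, P z ≠ 0 → 0 < r z)
    (hr_sum : ∀ u, ∑ x, r (x, u) ≤ 1) :
    condEnt P ≤ ∑ z, -(P z * logb 2 (r z)) := by
  set q : U → ℝ := fun u => ∑ x, P (x, u)
  have hPq : ∀ z, P z ≤ q z.2 := fun z => single_le_sum (fun x _ => hP (x, z.2)) (mem_univ z.1)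
  have hq_pos : ∀ z, P z ≠ 0 → 0 < q z.2 := fun z hz => ((hP z).lt_of_ne' hz).trans_le (hPq z)
  have hmass : ∑ z : X × U, q z.2 * r z ≤ ∑ z, P z :=
    calc ∑ z : X × U, q z.2 * r z = ∑ u, q u * ∑ x, r (x, u) := by
          simp only [Fintype.sum_prod_type_right, mul_sum]
      _ ≤ ∑ u, q u :=
          sum_le_sum fun u _ => mul_le_of_le_one_right (sum_nonneg fun x _ => hP _) (hr_sum u)
      _ = ∑ z, P z := (Fintype.sum_prod_type_right _).symm
  have hgibbs := shEnt_le_sum_neg_mul_logb hP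
    (fun z => mul_nonneg ((hP z).trans (hPq z)) (hr z))
    (fun z hz => mul_pos (hq_pos z hz) (hPr z hz)) hmass
  have hsplit : ∀ z, -(P z * logb 2 (q z.2 * r z)) =
      -(P z * logb 2 (q z.2)) + -(P z * logb 2 (r z)) := by
    intro z
    rcases eq_or_ne (P z) 0 with hz | hz
    · simp [hz]
    · rw [logb_mul (hq_pos z hz).ne' (hPr z hz).ne']
      ring
  have hmarg : ∑ z : X × U, -(P z * logb 2 (q z.2)) = shEnt q := by
    rw [Fintype.sum_prod_type_right, shEnt]
    exact sum_congr rfl fun u _ => by simp only [sum_neg_distrib, ← sum_mul]; rfl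
  simp only [hsplit, sum_add_distrib, hmarg] at hgibbs
  rw [condEnt]
  linarith

theorem condEnt_le_binEnt_add_mul_logb {S : Type*} [Fintype S] [DecidableEq S]
    (hS : 2 ≤ Fintype.card S) {P : S × S → ℝ} (hP : ∀ z, 0 ≤ P z) (htot : ∑ z, P z = 1)
    {Pe : ℝ} (hPe : ∑ z with z.1 ≠ z.2, P z = Pe) :
    condEnt P ≤ binEnt Pe + Pe * logb 2 ((Fintype.card S : ℝ) - 1) := by
  have hK : (0 : ℝ) < Fintype.card S - 1 := by
    have : (2 : ℝ) ≤ Fintype.card S := by exact_mod_cast hS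
    linarith
  set K : ℝ := (Fintype.card S : ℝ)
  have hdiag : ∑ z with z.1 = z.2, P z = 1 - Pe := by
    rw [← htot, ← hPe, ← sum_filter_add_sum_filter_not univ fun z : S × S => z.1 = z.2]
    ring
  have hle : ∀ z, P z ≤ if z.1 = z.2 then 1 - Pe else Pe := by
    intro z
    split_ifs with h
    · exact hdiag ▸ single_le_sum (fun z _ => hP z) (by simpa using h)
    · exact hPe ▸ single_le_sum (fun z _ => hP z) (by simpa using h)
  have hPe0 : 0 ≤ Pe := hPe ▸ sum_nonneg fun z _ => hP z
  have hPe1 : 0 ≤ 1 - Pe := hdiag ▸ sum_nonneg fun z _ => hP z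
  set r : S × S → ℝ := fun z => if z.1 = z.2 then 1 - Pe else Pe / (K - 1)
  refine (condEnt_le_sum_neg_mul_logb hP (r := r) ?_ ?_ ?_).trans_eq ?_
  · intro z
    dsimp only [r]
    split_ifs <;> positivity
  · intro z hz
    have hPz := (hP z).lt_of_ne' hz
    have := hle z
    dsimp only [r]
    split_ifs at this ⊢ <;> [linarith; exact div_pos (hPz.trans_le this) hK]
  · intro u
    simp only [r, sum_ite, filter_eq', filter_ne', sum_const, mem_univ, if_true, card_singleton,
      card_erase_of_mem, card_univ]
    rw [one_smul, nsmul_eq_mul, Nat.cast_pred (by omega), mul_div_cancel₀ _ hK.ne']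
    linarith
  · simp only [r, apply_ite, sum_ite, ← neg_mul, ← sum_mul, sum_neg_distrib, hdiag, ← ne_eq, hPe]
    rcases hPe0.eq_or_lt with rfl | hPe0
    · simp [binEnt]
    · rw [binEnt, logb_div hPe0.ne' hK.ne']
      ring

/-- Fano's inequality: `H(X|X̂) ≤ h₂(Pe) + Pe · log₂(|S| − 1)` where `Pe = Pr[X ≠ X̂]`. -/
theorem fano_inequality
    {Ω : Type*} [MeasurableSpace Ω] (μ : MeasureTheory.Measure Ω)
    [MeasureTheory.IsProbabilityMeasure μ]
    {S : Type*} [Fintype S] [MeasurableSpace S] [MeasurableSingletonClass S]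
    (hS : 2 ≤ Fintype.card S)
    (X Xh : Ω → S) (hX : Measurable X) (hXh : Measurable Xh) :
    condEnt (fun z : S × S => (μ {ω | X ω = z.1 ∧ Xh ω = z.2}).toReal) ≤
      binEnt ((μ {ω | X ω ≠ Xh ω}).toReal) +
        (μ {ω | X ω ≠ Xh ω}).toReal * Real.logb 2 ((Fintype.card S : ℝ) - 1) := by
  classical
  set f : Ω → S × S := fun ω => (X ω, Xh ω)
  have hfib : ∀ z : S × S, {ω | X ω = z.1 ∧ Xh ω = z.2} = f ⁻¹' {z} := fun z => by
    ext
    simp [f, Prod.ext_iff]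
  have hsum : ∀ s : Finset (S × S),
      ∑ z ∈ s, (μ {ω | X ω = z.1 ∧ Xh ω = z.2}).toReal = μ.real (f ⁻¹' s) := fun s => by
    simp only [hfib]
    exact sum_measureReal_preimage_singleton s fun z _ => hX.prodMk hXh (measurableSet_singleton z)
  refine condEnt_le_binEnt_add_mul_logb hS (fun _ => ENNReal.toReal_nonneg) ?_ ?_
  · simp [hsum]
  · rw [hsum]
    congr 1
    ext
    simp [f]
end
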